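/- Let c > 0 and V ∈ ℝ with |V| < c, and set γ_V = (1 − V²/c²)^(−1/2). Define T_V : ℝ³ → ℝ³ by T_V(u) = (γ_V(u₁ − (V/c)√(1 + ‖u‖²)), u₂, u₃). Let f : ℝ³ → ℝ be differentiable and set g = f ∘ T_{−V} (so that g(T_V(u)) = f(u) for all u). Then for every u ∈ ℝ³, writing u' = T_V(u): ∂₁g(u') = √((1 + ‖u‖²)/(1 + ‖u'‖²)) · ∂₁f(u), and for i = 2, 3: ∂ᵢg(u') = (V/c) γ_V (u'ᵢ/√(1 + ‖u'‖²)) · ∂₁f(u) + ∂ᵢf(u). -/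

import Mathlib

/-- The action `T_V` of a Lorentz boost with speed `V` along the first coordinate axis on
the reduced velocity: `T_V(u) = (γ_V(u₁ − (V/c)√(1 + ‖u‖²)), u₂, u₃)`,
with `γ_V = (1 − V²/c²)^(−1/2)`. -/
noncomputable def velBoost (c V : ℝ) (u : EuclideanSpace ℝ (Fin 3)) :
    EuclideanSpace ℝ (Fin 3) :=
  (WithLp.equiv 2 (Fin 3 → ℝ)).symm
    ![(1 / Real.sqrt (1 - V ^ 2 / c ^ 2)) * (u 0 - (V / c) * Real.sqrt (1 + ‖u‖ ^ 2)),
      u 1, u 2]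

/-!
`T_{−V}` inverts `T_V`, so with `u' = T_V u` the chain rule gives
`∂ᵢg(u') = Df(u)(DT_{−V}(u') eᵢ)`. As `T_{−V}` only moves the first coordinate,
`DT_{−V}(u') eᵢ = eᵢ + κᵢ e₁` with `κᵢ = γ_V (δᵢ₁ + (V/c) u'ᵢ / √(1+‖u'‖²)) − δᵢ₁`.
For `i = 2, 3` this is the claimed coefficient. For `i = 1`, the identity
`√(1+‖T_W w‖²) = γ_W (√(1+‖w‖²) − (W/c) w₁)` at `W = −V`, `w = u'` reads
`√(1+‖u‖²) = γ_V (√(1+‖u'‖²) + (V/c) u'₁)`, which turns `1 + κ₁` into `√(1+‖u‖²) / √(1+‖u'‖²)`.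
Lean indexes the coordinates from `0`, so the paper's `u₁` is `u 0`.
-/

open Real

local notation "ℝ³" => EuclideanSpace ℝ (Fin 3)

theorem mul_apply_lt_sqrt_one_add_norm_sq {ι : Type*} [Fintype ι] {k : ℝ} (hk : |k| ≤ 1)
    (u : EuclideanSpace ℝ ι) (i : ι) : k * u i < √(1 + ‖u‖ ^ 2) :=
  calc k * u i ≤ |k| * ‖u i‖ := by rw [Real.norm_eq_abs, ← abs_mul]; exact le_abs_self _
    _ ≤ ‖u‖ := (mul_le_of_le_one_left (norm_nonneg _) hk).trans (PiLp.norm_apply_le u i)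
    _ < √(1 + ‖u‖ ^ 2) := lt_sqrt_of_sq_lt (by linarith)

theorem hasFDerivAt_sqrt_one_add_norm_sq {F : Type*} [NormedAddCommGroup F] [InnerProductSpace ℝ F]
    (p : F) :
    HasFDerivAt (fun u : F => √(1 + ‖u‖ ^ 2)) ((√(1 + ‖p‖ ^ 2))⁻¹ • innerSL ℝ p) p := by
  have h := ((hasFDerivAt_id p).norm_sq.const_add 1).sqrt (by positivity)
  simp only [id_eq, ContinuousLinearMap.comp_id] at h
  convert h using 1
  ext e
  simp only [smul_apply, coe_innerSL_apply, smul_eq_mul, nsmul_eq_mul, Nat.cast_ofNat]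
  field_simp

noncomputable def lorentzFactor (c V : ℝ) : ℝ := 1 / √(1 - V ^ 2 / c ^ 2)

section Boost

variable {c V : ℝ}

theorem one_sub_sq_div_sq_pos (hV : |V| < c) : 0 < 1 - V ^ 2 / c ^ 2 := by
  have hc : 0 < c := (abs_nonneg V).trans_lt hV
  rw [sub_pos, div_lt_one (by positivity), ← sq_abs V]
  exact pow_lt_pow_left₀ hV (abs_nonneg V) two_ne_zero

theorem lorentzFactor_pos (hV : |V| < c) : 0 < lorentzFactor c V :=
  one_div_pos.2 (sqrt_pos.2 (one_sub_sq_div_sq_pos hV))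

theorem lorentzFactor_sq_mul (hV : |V| < c) : lorentzFactor c V ^ 2 * (1 - (V / c) ^ 2) = 1 := by
  have h := one_sub_sq_div_sq_pos hV
  rw [lorentzFactor, div_pow V c, one_div, inv_pow, sq_sqrt h.le, inv_mul_cancel₀ h.ne']

@[simp]
theorem lorentzFactor_neg : lorentzFactor c (-V) = lorentzFactor c V := by
  simp [lorentzFactor]

theorem abs_div_le_one_of_abs_lt (hV : |V| < c) : |V / c| ≤ 1 := by
  have hc : 0 < c := (abs_nonneg V).trans_lt hV
  rw [abs_div, abs_of_pos hc, div_le_one hc]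
  exact hV.le

theorem velBoost_apply_zero (u : ℝ³) :
    velBoost c V u 0 = lorentzFactor c V * (u 0 - V / c * √(1 + ‖u‖ ^ 2)) := by
  simp [velBoost, lorentzFactor]

@[simp]
theorem velBoost_apply_one (u : ℝ³) : velBoost c V u 1 = u 1 := by
  simp [velBoost]

@[simp]
theorem velBoost_apply_two (u : ℝ³) : velBoost c V u 2 = u 2 := by
  simp [velBoost]

theorem velBoost_eq_add_smul_single : velBoost c V = fun u =>
    u + (lorentzFactor c V * (u 0 - V / c * √(1 + ‖u‖ ^ 2)) - u 0) • EuclideanSpace.single 0 1 := by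
  funext u
  ext i
  fin_cases i <;> simp [velBoost_apply_zero]

theorem sqrt_one_add_norm_velBoost_sq (hV : |V| < c) (u : ℝ³) :
    √(1 + ‖velBoost c V u‖ ^ 2) = lorentzFactor c V * (√(1 + ‖u‖ ^ 2) - V / c * u 0) := by
  have hpos : 0 < √(1 + ‖u‖ ^ 2) - V / c * u 0 :=
    sub_pos.2 (mul_apply_lt_sqrt_one_add_norm_sq (abs_div_le_one_of_abs_lt hV) u 0)
  rw [← sqrt_sq (mul_pos (lorentzFactor_pos hV) hpos).le]
  congr 1
  have hs : √(1 + ‖u‖ ^ 2) ^ 2 = 1 + ‖u‖ ^ 2 := sq_sqrt (by positivity)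
  have hu : ‖u‖ ^ 2 = u 0 ^ 2 + u 1 ^ 2 + u 2 ^ 2 := by
    rw [EuclideanSpace.real_norm_sq_eq, Fin.sum_univ_three]
  rw [EuclideanSpace.real_norm_sq_eq, Fin.sum_univ_three, velBoost_apply_zero,
    velBoost_apply_one, velBoost_apply_two]
  linear_combination (u 0 ^ 2 - √(1 + ‖u‖ ^ 2) ^ 2) * lorentzFactor_sq_mul hV - hs - hu

theorem velBoost_neg_velBoost (hV : |V| < c) (u : ℝ³) : velBoost c (-V) (velBoost c V u) = u := by
  ext i
  fin_cases i
  · change velBoost c (-V) (velBoost c V u) 0 = u 0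
    rw [velBoost_apply_zero, sqrt_one_add_norm_velBoost_sq hV, velBoost_apply_zero,
      lorentzFactor_neg]
    linear_combination u 0 * lorentzFactor_sq_mul hV
  · simp
  · simp

theorem hasFDerivAt_velBoost (p : ℝ³) :
    HasFDerivAt (velBoost c V)
      (ContinuousLinearMap.id ℝ ℝ³ +
        (lorentzFactor c V • (EuclideanSpace.proj 0 - (V / c) • (√(1 + ‖p‖ ^ 2))⁻¹ • innerSL ℝ p)
          - EuclideanSpace.proj 0).smulRight (EuclideanSpace.single 0 1)) p := by
  have h0 : HasFDerivAt (fun u : ℝ³ => u 0) (EuclideanSpace.proj 0 : ℝ³ →L[ℝ] ℝ) p := by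
    simpa using (EuclideanSpace.proj (0 : Fin 3) : ℝ³ →L[ℝ] ℝ).hasFDerivAt (x := p)
  rw [velBoost_eq_add_smul_single]
  exact (hasFDerivAt_id p).add ((((h0.sub ((hasFDerivAt_sqrt_one_add_norm_sq p).const_mul
    (V / c))).const_mul _).sub h0).smul_const _)

theorem fderiv_comp_velBoost_apply {f : ℝ³ → ℝ} {p : ℝ³}
    (hf : DifferentiableAt ℝ f (velBoost c V p)) (e : ℝ³) :
    fderiv ℝ (f ∘ velBoost c V) p e = fderiv ℝ f (velBoost c V p) e +
      (lorentzFactor c V * (e 0 - V / c * (inner ℝ p e / √(1 + ‖p‖ ^ 2))) - e 0) *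
        fderiv ℝ f (velBoost c V p) (EuclideanSpace.single 0 1) := by
  rw [(hf.hasFDerivAt.comp p (hasFDerivAt_velBoost p)).fderiv]
  simp only [ContinuousLinearMap.comp_add, ContinuousLinearMap.comp_id,
    add_apply, ContinuousLinearMap.comp_apply,
    ContinuousLinearMap.smulRight_apply, sub_apply,
    smul_apply, PiLp.proj_apply, coe_innerSL_apply, smul_eq_mul, map_smul]
  ring

end Boost

theorem velBoost_partial_derivatives_general (c V : ℝ) (hV : |V| < c)
    (f : EuclideanSpace ℝ (Fin 3) → ℝ) (hf : Differentiable ℝ f)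
    (g : EuclideanSpace ℝ (Fin 3) → ℝ) (hg : g = f ∘ velBoost c (-V)) :
    ∀ u : EuclideanSpace ℝ (Fin 3),
      (fderiv ℝ g (velBoost c V u) (EuclideanSpace.single 0 1)
        = Real.sqrt ((1 + ‖u‖ ^ 2) / (1 + ‖velBoost c V u‖ ^ 2))
          * fderiv ℝ f u (EuclideanSpace.single 0 1)) ∧
      (∀ i : Fin 3, i = 1 ∨ i = 2 →
        fderiv ℝ g (velBoost c V u) (EuclideanSpace.single i 1)
          = (V / c) * (1 / Real.sqrt (1 - V ^ 2 / c ^ 2))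
              * (velBoost c V u i / Real.sqrt (1 + ‖velBoost c V u‖ ^ 2))
              * fderiv ℝ f u (EuclideanSpace.single 0 1)
            + fderiv ℝ f u (EuclideanSpace.single i 1)) := by
  intro u
  have hu : velBoost c (-V) (velBoost c V u) = u := velBoost_neg_velBoost hV u
  have hs : √(1 + ‖u‖ ^ 2) = lorentzFactor c V *
      (√(1 + ‖velBoost c V u‖ ^ 2) + V / c * velBoost c V u 0) := by
    have h := sqrt_one_add_norm_velBoost_sq (V := -V) (by rwa [abs_neg]) (velBoost c V u)
    rwa [hu, lorentzFactor_neg, neg_div, neg_mul, sub_neg_eq_add] at h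
  have hDg (i : Fin 3) : fderiv ℝ g (velBoost c V u) (EuclideanSpace.single i 1) =
      fderiv ℝ f u (EuclideanSpace.single i 1) +
        (lorentzFactor c V * (EuclideanSpace.single i (1 : ℝ) 0 +
            V / c * (velBoost c V u i / √(1 + ‖velBoost c V u‖ ^ 2)))
          - EuclideanSpace.single i (1 : ℝ) 0) * fderiv ℝ f u (EuclideanSpace.single 0 1) := by
    rw [hg, fderiv_comp_velBoost_apply (by rw [hu]; exact hf u), hu, lorentzFactor_neg,
      EuclideanSpace.inner_single_right, conj_trivial, one_mul]
    ring
  refine ⟨?_, fun i hi => ?_⟩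
  · rw [hDg, sqrt_div (by positivity), hs]
    have hs'pos := sqrt_pos.2 (by positivity : (0 : ℝ) < 1 + ‖velBoost c V u‖ ^ 2)
    simp only [PiLp.single_apply, if_true]
    field_simp
    ring
  · rw [hDg]
    rcases hi with rfl | rfl <;>
      simp only [lorentzFactor, PiLp.single_apply, Fin.reduceEq, if_false] <;> ring

/-- **Velocity-space derivatives of a Lorentz-invariant distribution** (Section 4.4): for
differentiable `f` and `g = f ∘ T_{−V}` (so `g(T_V u) = f(u)`), writing `u' = T_V u`,
`∂₁g(u') = √((1+‖u‖²)/(1+‖u'‖²)) ∂₁f(u)` and, for `i = 2, 3`,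
`∂ᵢg(u') = (V/c) γ_V (u'ᵢ/√(1+‖u'‖²)) ∂₁f(u) + ∂ᵢf(u)`. -/
theorem velBoost_partial_derivatives (c V : ℝ) (hc : 0 < c) (hV : |V| < c)
    (f : EuclideanSpace ℝ (Fin 3) → ℝ) (hf : Differentiable ℝ f)
    (g : EuclideanSpace ℝ (Fin 3) → ℝ) (hg : g = f ∘ velBoost c (-V)) :
    ∀ u : EuclideanSpace ℝ (Fin 3),
      (fderiv ℝ g (velBoost c V u) (EuclideanSpace.single 0 1)
        = Real.sqrt ((1 + ‖u‖ ^ 2) / (1 + ‖velBoost c V u‖ ^ 2))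
          * fderiv ℝ f u (EuclideanSpace.single 0 1)) ∧
      (∀ i : Fin 3, i = 1 ∨ i = 2 →
        fderiv ℝ g (velBoost c V u) (EuclideanSpace.single i 1)
          = (V / c) * (1 / Real.sqrt (1 - V ^ 2 / c ^ 2))
              * (velBoost c V u i / Real.sqrt (1 + ‖velBoost c V u‖ ^ 2))
              * fderiv ℝ f u (EuclideanSpace.single 0 1)
            + fderiv ℝ f u (EuclideanSpace.single i 1)) :=
  velBoost_partial_derivatives_general c V hV f hf g hg
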